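/- In the setting of the previous statement, the graph map γ : 𝒮 → X defined by γ(𝐭) = lim_{n→∞} f_𝐭 ∘ f_{ξ⁻¹𝐭} ∘ ⋯ ∘ f_{ξ⁻ⁿ𝐭}(x₀) is continuous, where 𝒮 carries the metric d_S(𝐭, 𝐭′) = Σ_{i≥0} d(t₋ᵢ, t′₋ᵢ)/2ⁱ. -/

import Mathlib

open Filter Topology

/-!
The partial compositions `bcomp f t n x₀` depend continuously on finitely many coordinates of
`t`, hence continuously on `t` in the product topology. Weak hyperbolicity says that the image of
`bcomp f t n` has uniformly small diameter for large `n`; since the later compositions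
`bcomp f t m x₀`, `m ≥ n`, stay in that image, so does their limit `γ t`, and the convergence
to `γ` is uniform. A uniform limit of continuous maps is continuous, and the solenoid metric is
finer than the product topology because `d(t₋ᵢ, t'₋ᵢ) ≤ 2ⁱ d_S(t, t')`.
-/

/-- The solenoid over the circle map `φ(t) = k t (mod 1)`; index `n` stands for `t₋ₙ`. -/
def Sol (k : ℕ) : Type := {t : ℕ → AddCircle (1 : ℝ) // ∀ n, t n = (k : ℤ) • t (n + 1)}

/-- Backward composition `f_{t₀} ∘ f_{t₋₁} ∘ ⋯ ∘ f_{t₋ₙ}` along the past of a base point. -/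
def bcomp {X : Type*} (f : AddCircle (1 : ℝ) → X → X) (t : ℕ → AddCircle (1 : ℝ)) :
    ℕ → X → X
  | 0 => f (t 0)
  | n + 1 => bcomp f t n ∘ f (t (n + 1))

section SolenoidMetric

variable {α : Type*} [PseudoMetricSpace α] [BoundedSpace α]

lemma summable_dist_div_two_pow (t t' : ℕ → α) :
    Summable fun i => dist (t i) (t' i) / 2 ^ i := by
  refine (summable_geometric_two.mul_left (Metric.diam (Set.univ : Set α))).of_nonneg_of_le
    (fun i => by positivity) fun i => ?_
  calc dist (t i) (t' i) / 2 ^ i ≤ Metric.diam (Set.univ : Set α) / 2 ^ i := by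
        gcongr
        exact Metric.dist_le_diam_of_mem (Bornology.IsBounded.all _) trivial trivial
    _ = Metric.diam (Set.univ : Set α) * (1 / 2) ^ i := by
        rw [one_div, inv_pow, div_eq_mul_inv]

lemma dist_le_two_pow_mul_tsum_dist_div_two_pow (t t' : ℕ → α) (i : ℕ) :
    dist (t i) (t' i) ≤ 2 ^ i * ∑' j, dist (t j) (t' j) / 2 ^ j := by
  have h := (summable_dist_div_two_pow t t').le_tsum i fun j _ => by positivity
  rwa [div_le_iff₀' (by positivity)] at h

lemma comap_tsum_dist_div_two_pow_le_nhds (t : ℕ → α) :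
    comap (fun t' : ℕ → α => ∑' i, dist (t i) (t' i) / 2 ^ i) (𝓝 0) ≤ 𝓝 t := by
  set d : (ℕ → α) → ℝ := fun t' => ∑' i, dist (t i) (t' i) / 2 ^ i
  refine tendsto_id'.1 (tendsto_pi_nhds.2 fun i => tendsto_iff_dist_tendsto_zero.2 ?_)
  have h : Tendsto (fun t' => 2 ^ i * d t') (comap d (𝓝 0)) (𝓝 0) := by
    simpa using (tendsto_comap (f := d) (x := 𝓝 0)).const_mul ((2 : ℝ) ^ i)
  refine squeeze_zero (fun _ => dist_nonneg) (fun t' => ?_) h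
  rw [id, dist_comm]
  exact dist_le_two_pow_mul_tsum_dist_div_two_pow t t' i

end SolenoidMetric

instance (k : ℕ) : TopologicalSpace (Sol k) :=
  TopologicalSpace.induced (fun tt : Sol k => tt.1) inferInstance

section BackwardComposition

variable {X : Type*} (f : AddCircle (1 : ℝ) → X → X)

lemma continuous_bcomp [TopologicalSpace X]
    (hf : Continuous fun p : AddCircle (1 : ℝ) × X => f p.1 p.2) (n : ℕ) :
    Continuous fun p : (ℕ → AddCircle (1 : ℝ)) × X => bcomp f p.1 n p.2 := by
  have hstep (m : ℕ) : Continuous fun p : (ℕ → AddCircle (1 : ℝ)) × X => f (p.1 m) p.2 :=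
    hf.comp (by fun_prop : Continuous fun p : (ℕ → AddCircle (1 : ℝ)) × X => (p.1 m, p.2))
  induction n with
  | zero => exact hstep 0
  | succ n ih => exact ih.comp (continuous_fst.prodMk (hstep (n + 1)))

lemma bcomp_mem_range_of_le (t : ℕ → AddCircle (1 : ℝ)) {n m : ℕ} (h : n ≤ m) (x : X) :
    bcomp f t m x ∈ Set.range (bcomp f t n) := by
  induction m, h using Nat.le_induction generalizing x with
  | base => exact ⟨x, rfl⟩
  | succ m _ ih => exact ih (f (t (m + 1)) x)

lemma dist_le_diam_range_bcomp [PseudoMetricSpace X] [BoundedSpace X]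
    (t : ℕ → AddCircle (1 : ℝ)) {x L : X}
    (hL : Tendsto (fun m => bcomp f t m x) atTop (𝓝 L)) (n : ℕ) (y : X) :
    dist L (bcomp f t n y) ≤ Metric.diam (Set.range (bcomp f t n)) := by
  have hL_mem : L ∈ closure (Set.range (bcomp f t n)) :=
    mem_closure_of_tendsto hL
      ((eventually_ge_atTop n).mono fun m hm => bcomp_mem_range_of_le f t hm x)
  rw [← Metric.diam_closure]
  exact Metric.dist_le_diam_of_mem (Bornology.IsBounded.all _) hL_mem (subset_closure ⟨y, rfl⟩)

lemma tendstoUniformly_bcomp [PseudoMetricSpace X] [BoundedSpace X] {k : ℕ}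
    (hwh : ∀ ε > 0, ∃ n₀ : ℕ, ∀ tt : Sol k, ∀ n ≥ n₀,
      Metric.diam (Set.range (bcomp f tt.1 n)) < ε)
    (γ : Sol k → X) (x₀ : X)
    (hγ : ∀ tt : Sol k, Tendsto (fun n => bcomp f tt.1 n x₀) atTop (𝓝 (γ tt))) :
    TendstoUniformly (fun n (tt : Sol k) => bcomp f tt.1 n x₀) γ atTop := by
  refine Metric.tendstoUniformly_iff.2 fun ε hε => ?_
  obtain ⟨n₀, hn₀⟩ := hwh ε hε
  filter_upwards [eventually_ge_atTop n₀] with n hn tt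
  exact (dist_le_diam_range_bcomp f tt.1 (hγ tt) n x₀).trans_lt (hn₀ tt n hn)

end BackwardComposition

/-- The graph map `γ(𝐭) = lim_n f_𝐭 ∘ f_{ξ⁻¹𝐭} ∘ ⋯ ∘ f_{ξ⁻ⁿ𝐭}(x₀)` is continuous with
respect to the solenoid metric `d_S(𝐭,𝐭') = Σᵢ d(t₋ᵢ, t'₋ᵢ)/2ⁱ`. -/
theorem graph_map_continuous {X : Type*} [MetricSpace X] [CompactSpace X] [Nonempty X]
    {k : ℕ} (f : AddCircle (1 : ℝ) → X → X)
    (hcont : Continuous fun p : AddCircle (1 : ℝ) × X => f p.1 p.2)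
    (hwh : ∀ ε > 0, ∃ n₀ : ℕ, ∀ tt : Sol k, ∀ n ≥ n₀,
      Metric.diam (bcomp f tt.1 n '' Set.univ) < ε)
    (γ : Sol k → X)
    (hγ : ∀ (tt : Sol k) (x : X), Tendsto (fun n => bcomp f tt.1 n x) atTop (𝓝 (γ tt))) :
    ∀ tt : Sol k, ∀ ε > 0, ∃ δ > 0, ∀ tt' : Sol k,
      (∑' i : ℕ, dist (tt.1 i) (tt'.1 i) / 2 ^ i) < δ → dist (γ tt) (γ tt') < ε := by
  intro tt ε hε
  obtain ⟨x₀⟩ := ‹Nonempty X›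
  have hγ_cont : Continuous γ :=
    (tendstoUniformly_bcomp f (by simpa only [Set.image_univ] using hwh) γ x₀
      (hγ · x₀)).continuous (Frequently.of_forall fun n =>
        (continuous_bcomp f hcont n).comp (continuous_induced_dom.prodMk continuous_const))
  have hγ_tendsto : Tendsto γ
      (comap (fun tt' : Sol k => ∑' i, dist (tt.1 i) (tt'.1 i) / 2 ^ i) (𝓝 0)) (𝓝 (γ tt)) := by
    refine hγ_cont.continuousAt.mono_left ?_
    rw [nhds_induced]
    refine le_trans ?_ (comap_mono (comap_tsum_dist_div_two_pow_le_nhds tt.1))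
    rw [comap_comap]
    rfl
  obtain ⟨δ, hδ, hball⟩ :=
    ((Metric.nhds_basis_ball.comap _).tendsto_iff Metric.nhds_basis_ball).1 hγ_tendsto ε hε
  refine ⟨δ, hδ, fun tt' hlt => ?_⟩
  rw [dist_comm]
  refine hball tt' ?_
  rwa [Set.mem_preimage, Metric.mem_ball, Real.dist_0_eq_abs,
    abs_of_nonneg (tsum_nonneg fun i => by positivity)]
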